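/- Let B be a von Neumann algebra on a complex Hilbert space G and let E ⊆ B(G,H) be a concrete von Neumann B-module. Then A := {a ∈ B(H) : a∘x ∈ E and a*∘x ∈ E for all x ∈ E} is a unital *-subalgebra of B(H) that is closed in the weak operator topology of B(H) and equal to its double commutant in B(H); in particular, A is a von Neumann algebra on H. -/

import Mathlib

noncomputable section

variable {G H K : Type*}
  [NormedAddCommGroup G] [InnerProductSpace ℂ G] [CompleteSpace G]
  [NormedAddCommGroup H] [InnerProductSpace ℂ H] [CompleteSpace H]
  [NormedAddCommGroup K] [InnerProductSpace ℂ K] [CompleteSpace K]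

/-- The weak operator topology on `G →L[ℂ] H`: the coarsest topology making all the maps
`T ↦ ⟨h, T g⟩` continuous. -/
def wot (G H : Type*) [NormedAddCommGroup G] [InnerProductSpace ℂ G]
    [NormedAddCommGroup H] [InnerProductSpace ℂ H] : TopologicalSpace (G →L[ℂ] H) :=
  ⨅ p : G × H, TopologicalSpace.induced
    (fun T : G →L[ℂ] H => (inner ℂ p.2 (T p.1) : ℂ)) inferInstance

/-- The set `{x g : x ∈ E, g ∈ G}` spans a dense subspace of `H`. -/
def SpansDensely (E : Set (G →L[ℂ] H)) : Prop :=
  Dense ((Submodule.span ℂ {h : H | ∃ x ∈ E, ∃ g : G, x g = h} : Submodule ℂ H) : Set H)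

/-- `E ⊆ B(G,H)` is a concrete von Neumann `B`-module: a complex linear subspace, stable under
composition with elements of `B` from the right, with `x* ∘ y ∈ B` for all `x, y ∈ E`, acting
nondegenerately on `G`, and closed in the weak operator topology. -/
structure IsConcreteVNModule (B : VonNeumannAlgebra G) (E : Set (G →L[ℂ] H)) : Prop where
  zero_mem : (0 : G →L[ℂ] H) ∈ E
  add_mem : ∀ x ∈ E, ∀ y ∈ E, x + y ∈ E
  smul_mem : ∀ (c : ℂ), ∀ x ∈ E, c • x ∈ E
  comp_mem : ∀ x ∈ E, ∀ b ∈ B, x.comp b ∈ E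
  adjoint_comp_mem : ∀ x ∈ E, ∀ y ∈ E, (ContinuousLinearMap.adjoint x).comp y ∈ B
  dense : SpansDensely E
  isClosed : @IsClosed _ (wot G H) E

/-- A map `ρ : B(G) → B(H)` restricts on the subset `S ⊆ B(G)` to a normal unital
`*`-homomorphism: it is linear, multiplicative and star-preserving on `S`, unital, and its
restriction to the closed unit ball of `S` is continuous from the weak operator topology of
`B(G)` to the weak operator topology of `B(H)`. -/
structure IsNormalUnitalStarHom (S : Set (G →L[ℂ] G)) (ρ : (G →L[ℂ] G) → (H →L[ℂ] H)) :
    Prop where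
  map_add : ∀ a ∈ S, ∀ b ∈ S, ρ (a + b) = ρ a + ρ b
  map_smul : ∀ (c : ℂ), ∀ a ∈ S, ρ (c • a) = c • ρ a
  map_mul : ∀ a ∈ S, ∀ b ∈ S, ρ (a * b) = ρ a * ρ b
  map_star : ∀ a ∈ S, ρ (star a) = star (ρ a)
  map_one : ρ 1 = 1
  normal : @Continuous {b : G →L[ℂ] G // b ∈ S ∧ ‖b‖ ≤ 1} (H →L[ℂ] H)
    (TopologicalSpace.induced (fun b => b.1) (wot G G)) (wot H H) (fun b => ρ b.1)

/-- The space of intertwiners: `x ∈ B(G,H)` with `ρ(b') ∘ x = x ∘ b'` for all `b' ∈ S`. -/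
def intertwinerSpace (S : Set (G →L[ℂ] G)) (ρ : (G →L[ℂ] G) → (H →L[ℂ] H)) :
    Set (G →L[ℂ] H) :=
  {x | ∀ b' ∈ S, (ρ b').comp x = x.comp b'}

/-- The adjointable operators of `E`, realized concretely inside `B(H)`. -/
def adjointableOps (E : Set (G →L[ℂ] H)) : Set (H →L[ℂ] H) :=
  {a : H →L[ℂ] H | ∀ x ∈ E, a.comp x ∈ E ∧ (ContinuousLinearMap.adjoint a).comp x ∈ E}


/-!
Write `ρ(B')` for the operators `d` on `H` with `d ∘ x = x ∘ b'` for all `x ∈ E`, for some `b'`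
in the commutant `B'`. The adjointable operators are exactly the commutant of `ρ(B')`, and
`ρ(B')` is `*`-closed, so they form a WOT-closed von Neumann algebra. The inclusion
`ρ(B')' ⊆ A` amounts to a bicommutant theorem for `E`: every `y` intertwining all pairs
`(ρ(b'), b')` lies in `E`. This is proved as von Neumann's: for a finite family `g` of vectors,
the projections onto the closures of `B g` and `E g` (inside the amplifications `Gⁿ`, `Hⁿ`) have
block entries forming such pairs, so the amplification of `y` maps `g` into the closure of `E g`;
hence `y` is in the strong, thus weak, closure of `E`.
-/

open ContinuousLinearMap Filter Topology

section Projection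

variable {𝕜 E F : Type*} [RCLike 𝕜]
  [NormedAddCommGroup E] [InnerProductSpace 𝕜 E] [CompleteSpace E]
  [NormedAddCommGroup F] [InnerProductSpace 𝕜 F] [CompleteSpace F]

theorem Submodule.starProjection_comp_eq_comp_starProjection (K : Submodule 𝕜 E)
    (L : Submodule 𝕜 F) [K.HasOrthogonalProjection] [L.HasOrthogonalProjection] {T : E →L[𝕜] F}
    (hK : Set.MapsTo T K L) (hL : Set.MapsTo (adjoint T) L K) :
    L.starProjection ∘L T = T ∘L K.starProjection := by
  ext v
  have hperp : T (v - K.starProjection v) ∈ Lᗮ := fun w hw => by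
    rw [← adjoint_inner_left]
    exact Submodule.inner_right_of_mem_orthogonal (hL hw) (K.sub_starProjection_mem_orthogonal v)
  calc L.starProjection (T v)
      = L.starProjection (T (K.starProjection v) + T (v - K.starProjection v)) := by
        rw [← map_add, add_sub_cancel]
    _ = T (K.starProjection v) := by
        rw [map_add, Submodule.starProjection_eq_self_iff.2 (hK (K.starProjection_apply_mem v)),
          (L.starProjection_apply_eq_zero_iff).2 hperp, add_zero]

theorem Submodule.starProjection_topologicalClosure_comp_eq (K : Submodule 𝕜 E)
    (L : Submodule 𝕜 F) {T : E →L[𝕜] F}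
    (hK : Set.MapsTo T K L) (hL : Set.MapsTo (adjoint T) L K) :
    L.topologicalClosure.starProjection ∘L T = T ∘L K.topologicalClosure.starProjection := by
  apply Submodule.starProjection_comp_eq_comp_starProjection
  · simpa only [Submodule.topologicalClosure_coe] using hK.closure T.continuous
  · simpa only [Submodule.topologicalClosure_coe] using hL.closure (adjoint T).continuous

end Projection

theorem PiLp.sum_single {ι E : Type*} [Fintype ι] [DecidableEq ι] [AddCommGroup E]
    (v : PiLp 2 (fun _ : ι => E)) : ∑ q, PiLp.single 2 q (v q) = v := by
  ext i
  simp

namespace ContinuousLinearMap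

section Ampliation

variable {𝕜 E F W : Type*} [RCLike 𝕜]
  [NormedAddCommGroup E] [InnerProductSpace 𝕜 E]
  [NormedAddCommGroup F] [InnerProductSpace 𝕜 F]
  [NormedAddCommGroup W] [InnerProductSpace 𝕜 W]
  (ι : Type*)

def ampliation (T : E →L[𝕜] F) : PiLp 2 (fun _ : ι => E) →L[𝕜] PiLp 2 (fun _ : ι => F) :=
  (PiLp.continuousLinearEquiv 2 𝕜 _).symm.toContinuousLinearMap ∘L
    ContinuousLinearMap.pi (fun i => T ∘L PiLp.proj 2 (fun _ : ι => E) i)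

@[simp]
theorem ampliation_apply (T : E →L[𝕜] F) (v : PiLp 2 (fun _ : ι => E)) (i : ι) :
    ampliation ι T v i = T (v i) := rfl

def ampliationApply (v : PiLp 2 (fun _ : ι => E)) :
    (E →L[𝕜] F) →ₗ[𝕜] PiLp 2 (fun _ : ι => F) where
  toFun T := ampliation ι T v
  map_add' _ _ := by ext; simp
  map_smul' _ _ := by ext; simp

variable {ι}

section FiniteIndex

variable [Fintype ι]

theorem adjoint_ampliation [CompleteSpace E] [CompleteSpace F] (T : E →L[𝕜] F) :
    adjoint (ampliation ι T) = ampliation ι (adjoint T) := by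
  refine ((eq_adjoint_iff _ _).2 fun v w => ?_).symm
  simp [PiLp.inner_apply, adjoint_inner_left]

theorem starProjection_comp_ampliation [CompleteSpace F] [CompleteSpace W]
    {V : Submodule 𝕜 (E →L[𝕜] F)} {V' : Submodule 𝕜 (E →L[𝕜] W)} {T : F →L[𝕜] W}
    (hT : ∀ x ∈ V, T ∘L x ∈ V') (hT' : ∀ x ∈ V', adjoint T ∘L x ∈ V)
    (g : PiLp 2 (fun _ : ι => E)) :
    (V'.map (ampliationApply ι g)).topologicalClosure.starProjection ∘L ampliation ι T =
      ampliation ι T ∘L (V.map (ampliationApply ι g)).topologicalClosure.starProjection := by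
  refine Submodule.starProjection_topologicalClosure_comp_eq _ _ ?_ ?_
  · rintro _ ⟨x, hx, rfl⟩
    exact ⟨T ∘L x, hT x hx, rfl⟩
  · rw [adjoint_ampliation]
    rintro _ ⟨x, hx, rfl⟩
    exact ⟨adjoint T ∘L x, hT' x hx, rfl⟩

end FiniteIndex

variable [DecidableEq ι]

def blockEntry (T : PiLp 2 (fun _ : ι => E) →L[𝕜] PiLp 2 (fun _ : ι => F)) (p q : ι) :
    E →L[𝕜] F :=
  PiLp.proj 2 (fun _ : ι => F) p ∘L T ∘L
    (PiLp.continuousLinearEquiv 2 𝕜 _).symm.toContinuousLinearMap ∘L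
      ContinuousLinearMap.single 𝕜 (fun _ : ι => E) q

theorem blockEntry_apply (T : PiLp 2 (fun _ : ι => E) →L[𝕜] PiLp 2 (fun _ : ι => F))
    (p q : ι) (v : E) :
    blockEntry T p q v = T (PiLp.single 2 q v) p := rfl

theorem ampliation_single (x : E →L[𝕜] F) (q : ι) (v : E) :
    ampliation ι x (PiLp.single 2 q v) = PiLp.single 2 q (x v) := by
  ext i
  by_cases hi : i = q <;> simp [hi]

theorem comp_ampliation_eq_iff [Fintype ι]
    (S : PiLp 2 (fun _ : ι => E) →L[𝕜] PiLp 2 (fun _ : ι => E))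
    (T : PiLp 2 (fun _ : ι => F) →L[𝕜] PiLp 2 (fun _ : ι => F)) (x : E →L[𝕜] F) :
    T ∘L ampliation ι x = ampliation ι x ∘L S ↔
      ∀ p q, blockEntry T p q ∘L x = x ∘L blockEntry S p q := by
  constructor
  · intro h p q
    ext v
    simpa [blockEntry_apply, ampliation_single] using
      congrArg (fun f => f (PiLp.single 2 q v) p) h
  · intro h
    ext v p
    conv_lhs => rw [← PiLp.sum_single v]
    conv_rhs => rw [← PiLp.sum_single v]
    simp only [comp_apply, map_sum, WithLp.ofLp_sum, Finset.sum_apply]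
    refine Finset.sum_congr rfl fun q _ => ?_
    rw [ampliation_single, ampliation_apply, ← blockEntry_apply, ← blockEntry_apply,
      ← comp_apply, h, comp_apply]

end Ampliation

end ContinuousLinearMap

section WeakOperatorTopology

variable {E F : Type*} [NormedAddCommGroup E] [InnerProductSpace ℂ E]
  [NormedAddCommGroup F] [InnerProductSpace ℂ F]

theorem continuous_wot_inner_apply (v : E) (w : F) :
    @Continuous _ _ (wot E F) _ fun T : E →L[ℂ] F => (inner ℂ w (T v) : ℂ) :=
  continuous_iInf_dom (i := (v, w)) continuous_induced_dom

theorem nhds_wot (y : E →L[ℂ] F) :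
    @nhds _ (wot E F) y = ⨅ p : E × F,
      comap (fun T : E →L[ℂ] F => (inner ℂ p.2 (T p.1) : ℂ)) (𝓝 (inner ℂ p.2 (y p.1))) := by
  rw [wot, nhds_iInf]
  exact iInf_congr fun p => nhds_induced _ y

theorem isClosed_wot_centralizer [CompleteSpace F] (S : Set (F →L[ℂ] F)) :
    @IsClosed _ (wot F F) (Set.centralizer S) := by
  let _ := wot F F
  have hS : Set.centralizer S =
      ⋂ d ∈ S, ⋂ v, ⋂ w, {c | (inner ℂ (adjoint d w) (c v) : ℂ) = inner ℂ w (c (d v))} := by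
    ext c
    simp only [Set.mem_centralizer_iff, Set.mem_iInter, Set.mem_ofPred_eq, adjoint_inner_left]
    refine forall₂_congr fun d _ => ?_
    rw [ContinuousLinearMap.ext_iff]
    exact forall_congr' fun v => ⟨fun h w => congrArg _ h, ext_inner_left ℂ⟩
  rw [hS]
  exact isClosed_biInter fun d _ => isClosed_iInter fun v => isClosed_iInter fun w =>
    isClosed_eq (continuous_wot_inner_apply v _) (continuous_wot_inner_apply (d v) w)

theorem mem_closure_wot_of_forall_finite {S : Set (E →L[ℂ] F)} {y : E →L[ℂ] F}
    (h : ∀ s : Set E, s.Finite →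
      (fun v : s => y v) ∈ closure ((fun (x : E →L[ℂ] F) (v : s) => x v) '' S)) :
    y ∈ @closure _ (wot E F) S := by
  rw [@mem_closure_iff_nhds _ (wot E F)]
  intro t ht
  rw [nhds_wot, Filter.mem_iInf] at ht
  obtain ⟨I, hI, V, hV, rfl⟩ := ht
  choose O hO hOV using fun i : I => Filter.mem_comap.1 (hV i)
  have : Finite I := hI.to_subtype
  have hs : Set.Finite (Prod.fst '' I) := hI.image _
  let U : Set (Prod.fst '' I → F) :=
    ⋂ i : I, (fun f => (inner ℂ i.1.2 (f ⟨i.1.1, Set.mem_image_of_mem _ i.2⟩) : ℂ)) ⁻¹' O i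
  have hU : U ∈ 𝓝 (fun v : Prod.fst '' I => y v) :=
    Filter.iInter_mem.2 fun i =>
      (continuous_const.inner (continuous_apply _)).continuousAt.preimage_mem_nhds (hO i)
  obtain ⟨_, hxU, x, hx, rfl⟩ := mem_closure_iff_nhds.1 (h _ hs) U hU
  exact ⟨x, Set.mem_iInter.2 fun i => hOV i (Set.mem_iInter.1 hxU i), hx⟩

end WeakOperatorTopology

namespace VonNeumannAlgebra

def centralizer (S : Set (H →L[ℂ] H)) (hS : star S ⊆ S) : VonNeumannAlgebra H where
  toStarSubalgebra := StarSubalgebra.centralizer ℂ S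
  centralizer_centralizer' := by
    change Set.centralizer (Set.centralizer (StarSubalgebra.centralizer ℂ S : Set (H →L[ℂ] H))) =
      (StarSubalgebra.centralizer ℂ S : Set (H →L[ℂ] H))
    rw [StarSubalgebra.coe_centralizer, Set.union_eq_left.2 hS,
      Set.centralizer_centralizer_centralizer]

@[simp]
theorem coe_centralizer (S : Set (H →L[ℂ] H)) (hS : star S ⊆ S) :
    (centralizer S hS : Set (H →L[ℂ] H)) = Set.centralizer S := by
  rw [← coe_toStarSubalgebra, centralizer, StarSubalgebra.coe_centralizer,
    Set.union_eq_left.2 hS]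

end VonNeumannAlgebra

/-- The image `ρ(B')` of the representation of `B'` on `H` given by `ρ(b') ∘ x = x ∘ b'`. -/
def liftedCommutant (B : VonNeumannAlgebra G) (E : Set (G →L[ℂ] H)) : Set (H →L[ℂ] H) :=
  {d | ∃ b' ∈ B.commutant, ∀ x ∈ E, d ∘L x = x ∘L b'}

namespace IsConcreteVNModule

variable {B : VonNeumannAlgebra G} {E : Set (G →L[ℂ] H)}

def toSubmodule (hE : IsConcreteVNModule B E) : Submodule ℂ (G →L[ℂ] H) where
  carrier := E
  add_mem' {x y} hx hy := hE.add_mem x hx y hy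
  zero_mem' := hE.zero_mem
  smul_mem' c x hx := hE.smul_mem c x hx

theorem ext_of_comp_eq (hE : IsConcreteVNModule B E) {F : Type*} [NormedAddCommGroup F]
    [NormedSpace ℂ F] {u v : H →L[ℂ] F} (h : ∀ x ∈ E, u ∘L x = v ∘L x) : u = v :=
  ContinuousLinearMap.ext_on hE.dense fun _ ⟨x, hx, g, hxg⟩ => hxg ▸ congrArg (· g) (h x hx)

theorem star_liftedCommutant_subset (hE : IsConcreteVNModule B E) :
    star (liftedCommutant B E) ⊆ liftedCommutant B E := by
  rintro d ⟨b', hb', hd⟩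
  refine ⟨star b', star_mem hb', fun x hx => ?_⟩
  have key : adjoint x ∘L star d = b' ∘L adjoint x := hE.ext_of_comp_eq fun z hz => by
    rw [comp_assoc, hd z hz, ← comp_assoc, comp_assoc b']
    exact VonNeumannAlgebra.mem_commutant_iff.1 hb' _ (hE.adjoint_comp_mem x hx z hz)
  calc d ∘L x = adjoint (adjoint x ∘L star d) := by
        rw [adjoint_comp, adjoint_adjoint, ← star_eq_adjoint, star_star]
    _ = x ∘L star b' := by rw [key, adjoint_comp, adjoint_adjoint, star_eq_adjoint]

theorem ampliation_mem_closure_of_intertwines (hE : IsConcreteVNModule B E) {y : G →L[ℂ] H}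
    (hy : ∀ b' ∈ B.commutant, ∀ d : H →L[ℂ] H, (∀ x ∈ E, d ∘L x = x ∘L b') → d ∘L y = y ∘L b')
    {ι : Type*} [Fintype ι] [DecidableEq ι] (g : PiLp 2 (fun _ : ι => G)) :
    ampliation ι y g ∈ (hE.toSubmodule.map (ampliationApply ι g)).topologicalClosure := by
  set M := (Subalgebra.toSubmodule B.toSubalgebra).map (ampliationApply ι g)
  set N := hE.toSubmodule.map (ampliationApply ι g)
  set P := M.topologicalClosure.starProjection
  set Q := N.topologicalClosure.starProjection
  have hPB : ∀ b ∈ B, P ∘L ampliation ι b = ampliation ι b ∘L P := fun b hb =>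
    starProjection_comp_ampliation (fun c hc => mul_mem hb hc)
      (fun c hc => mul_mem (show adjoint b ∈ B from star_eq_adjoint b ▸ star_mem hb) hc) g
  have hQE : ∀ x ∈ E, Q ∘L ampliation ι x = ampliation ι x ∘L P := fun x hx =>
    starProjection_comp_ampliation (fun b hb => hE.comp_mem x hx b hb)
      (fun z hz => hE.adjoint_comp_mem x hx z hz) g
  have hentry : ∀ p q, blockEntry Q p q ∘L y = y ∘L blockEntry P p q := fun p q =>
    hy _ (VonNeumannAlgebra.mem_commutant_iff.2 fun b hb =>
        ((comp_ampliation_eq_iff P P b).1 (hPB b hb) p q).symm) _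
      fun x hx => (comp_ampliation_eq_iff P Q x).1 (hQE x hx) p q
  have hg : P g = g :=
    Submodule.starProjection_eq_self_iff.2 (M.le_topologicalClosure ⟨1, B.one_mem, rfl⟩)
  rw [← hg, ← comp_apply, ← (comp_ampliation_eq_iff P Q y).2 hentry]
  exact N.topologicalClosure.starProjection_apply_mem _

theorem mem_of_intertwines (hE : IsConcreteVNModule B E) {y : G →L[ℂ] H}
    (hy : ∀ b' ∈ B.commutant, ∀ d : H →L[ℂ] H, (∀ x ∈ E, d ∘L x = x ∘L b') → d ∘L y = y ∘L b') :
    y ∈ E := by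
  refine @IsClosed.closure_subset _ (wot G H) _ hE.isClosed _
    (mem_closure_wot_of_forall_finite fun s hs => ?_)
  have := hs.fintype
  classical
  have h := hE.ampliation_mem_closure_of_intertwines hy (WithLp.toLp 2 fun v : s => (v : G))
  rw [← SetLike.mem_coe, Submodule.topologicalClosure_coe] at h
  refine map_mem_closure (PiLp.continuous_ofLp 2 _) h ?_
  rintro _ ⟨x, hx, rfl⟩
  exact ⟨x, hx, rfl⟩

theorem adjointableOps_eq_centralizer (hE : IsConcreteVNModule B E) :
    adjointableOps E = Set.centralizer (liftedCommutant B E) := by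
  have hcomp : ∀ c ∈ Set.centralizer (liftedCommutant B E), ∀ x ∈ E, c ∘L x ∈ E :=
    fun c hc x hx => hE.mem_of_intertwines fun b' hb' d hd => by
      rw [← comp_assoc, ← mul_def, hc d ⟨b', hb', hd⟩, mul_def, comp_assoc, hd x hx, comp_assoc]
  ext a
  constructor
  · rintro ha d ⟨b', -, hd⟩
    refine hE.ext_of_comp_eq fun x hx => ?_
    rw [mul_def, mul_def, comp_assoc, comp_assoc, hd x hx, hd _ (ha x hx).1, comp_assoc]
  · intro hc x hx
    have hW := VonNeumannAlgebra.coe_centralizer _ hE.star_liftedCommutant_subset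
    have hstar : adjoint a ∈ Set.centralizer (liftedCommutant B E) := by
      rw [← hW, SetLike.mem_coe] at hc ⊢
      exact star_eq_adjoint a ▸ star_mem hc
    exact ⟨hcomp a hc x hx, hcomp _ hstar x hx⟩

end IsConcreteVNModule

/-- for a concrete von Neumann `B`-module `E`, the adjointable operators form a
unital `*`-subalgebra of `B(H)` that is WOT-closed and equal to its double commutant, i.e. a
von Neumann algebra on `H`. -/
theorem stmt6 (B : VonNeumannAlgebra G) (E : Set (G →L[ℂ] H))
    (hE : IsConcreteVNModule B E) :
    (1 : H →L[ℂ] H) ∈ adjointableOps E ∧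
    (∀ a ∈ adjointableOps E, ∀ b ∈ adjointableOps E, a + b ∈ adjointableOps E) ∧
    (∀ (c : ℂ), ∀ a ∈ adjointableOps E, c • a ∈ adjointableOps E) ∧
    (∀ a ∈ adjointableOps E, ∀ b ∈ adjointableOps E, a * b ∈ adjointableOps E) ∧
    (∀ a ∈ adjointableOps E, star a ∈ adjointableOps E) ∧
    @IsClosed _ (wot H H) (adjointableOps E) ∧
    Set.centralizer (Set.centralizer (adjointableOps E)) = adjointableOps E ∧
    ∃ W : VonNeumannAlgebra H, (W : Set (H →L[ℂ] H)) = adjointableOps E := by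
  set W := VonNeumannAlgebra.centralizer _ hE.star_liftedCommutant_subset
  have hW : (W : Set (H →L[ℂ] H)) = adjointableOps E := by
    rw [VonNeumannAlgebra.coe_centralizer, hE.adjointableOps_eq_centralizer]
  rw [← hW]
  refine ⟨W.one_mem, fun a ha b hb => W.add_mem ha hb, fun c a ha => W.smul_mem ha c,
    fun a ha b hb => W.mul_mem ha hb, fun a ha => star_mem ha, ?_, W.centralizer_centralizer,
    W, rfl⟩
  rw [VonNeumannAlgebra.coe_centralizer]
  exact isClosed_wot_centralizer _
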